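/- Tsen's theorem: let k be an algebraically closed field. Then the rational function field k(t) is a C_1 field: for every integer d ≥ 1 and every homogeneous polynomial f of degree d in n variables over k(t) with n > d, there exists a nonzero vector x in k(t)^n with f(x) = 0. (Used in the paper via the fact that the function field of a curve over an algebraically closed field is C_1 and that function fields of surfaces over algebraically closed fields are C_2.) -/

import Mathlib

/-!
Clearing denominators reduces the statement to a polynomial `f` over `k[t]` without constant
term and of total degree `d < n`. Substitute `xᵢ = ∑_{j ≤ s} a_{ij} tʲ` with unknowns
`a_{ij} ∈ k`. If the coefficients of `f` have degree at most `m`, then `f(x)` has degree at most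
`d s + m`, and each of its `d s + m + 1` coefficients is a polynomial in the `n (s + 1)` unknowns
vanishing at `a = 0`. For `s = m + 1` there are fewer equations than unknowns, so over the
algebraically closed field `k` they have a common zero `a ≠ 0`: otherwise, by the
Nullstellensatz, the maximal ideal of the origin would be minimal over an ideal with fewer
generators than its height `n (s + 1)`, against Krull's height theorem.
-/

open Polynomial

namespace Polynomial

theorem map_ofFn {R S : Type*} [Semiring R] [Semiring S] [DecidableEq R] [DecidableEq S]
    (φ : R →+* S) (n : ℕ) (v : Fin n → R) :
    (ofFn n v).map φ = ofFn n (φ ∘ v) := by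
  simp [ofFn_eq_sum_monomial, Polynomial.map_sum]

end Polynomial

namespace MvPolynomial

variable {ι σ R S : Type*}

noncomputable def translate [CommRing R] (a : σ → R) :
    MvPolynomial σ R ≃ₐ[R] MvPolynomial σ R :=
  AlgEquiv.ofAlgHom (aeval fun i => X i + C (a i)) (aeval fun i => X i - C (a i))
    (algHom_ext fun i => by simp) (algHom_ext fun i => by simp)

@[simp]
theorem eval_translate [CommRing R] (a x : σ → R) (p : MvPolynomial σ R) :
    eval x (translate a p) = eval (x + a) p := by
  induction p using MvPolynomial.induction_on <;> simp_all [translate]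

theorem totalDegree_map_of_injective [CommSemiring R] [CommSemiring S] {f : R →+* S}
    (hf : Function.Injective f) (p : MvPolynomial ι R) :
    (map f p).totalDegree = p.totalDegree := by
  simp only [totalDegree, support_map_of_injective p hf]

theorem natDegree_eval₂_le [CommSemiring R] [CommSemiring S] (g : R →+* S[X]) (x : ι → S[X])
    (p : MvPolynomial ι R) {s m : ℕ} (hx : ∀ i, (x i).natDegree ≤ s)
    (hp : ∀ μ, (g (p.coeff μ)).natDegree ≤ m) :
    (eval₂ g x p).natDegree ≤ p.totalDegree * s + m := by
  rw [eval₂_eq]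
  refine natDegree_sum_le_of_forall_le _ _ fun μ hμ => natDegree_mul_le.trans ?_
  have hprod : (∏ i ∈ μ.support, x i ^ μ i).natDegree ≤ μ.degree * s := by
    rw [Finsupp.degree_apply, Finset.sum_mul]
    exact (natDegree_prod_le _ _).trans <|
      Finset.sum_le_sum fun i _ => natDegree_pow_le.trans (Nat.mul_le_mul_left _ (hx i))
  have hμ : μ.degree * s ≤ p.totalDegree * s := Nat.mul_le_mul_right _ (le_totalDegree hμ)
  have := hp μ
  omega

theorem exists_forall_eval_eq_coeff_eval_ofFn [CommSemiring R] [DecidableEq R]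
    (p : MvPolynomial ι R[X]) (n : ℕ) :
    ∃ F : ℕ → MvPolynomial (ι × Fin n) R,
      ∀ a r, eval a (F r) = (eval (fun i => ofFn n fun j => a (i, j)) p).coeff r := by
  classical
  refine ⟨fun r => (eval₂ (mapRingHom C) (fun i => ofFn n fun j => X (i, j)) p).coeff r,
    fun a r => ?_⟩
  rw [← Polynomial.coeff_map, ← coe_mapRingHom, hom_eval₂, mapRingHom_comp]
  congr 2
  · ext <;> simp
  · ext i : 1
    simp [map_ofFn, Function.comp_def]

theorem exists_map_eq_smul [CommRing R] [CommRing S] [Algebra R S] (M : Submonoid R)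
    [IsLocalization M S] (p : MvPolynomial ι S) :
    ∃ b ∈ M, ∃ q : MvPolynomial ι R, map (algebraMap R S) q = b • p := by
  obtain ⟨b, hb⟩ := IsLocalization.exist_integer_multiples_of_finset M p.coeffs
  refine ⟨b, b.2, mem_range_map_iff_coeffs_subset.2 fun c hc => ?_⟩
  obtain ⟨μ, hμ, rfl⟩ := mem_coeffs_iff.1 hc
  rw [mem_support_iff, coeff_smul] at hμ
  rw [coeff_smul]
  exact hb _ (coeff_mem_coeffs _ (right_ne_zero_of_smul hμ))

theorem exists_ne_zero_eval_eq_zero_of_isFractionRing [Fintype ι] (R : Type*) {K : Type*}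
    [CommRing R] [IsDomain R] [Field K] [Algebra R K] [IsFractionRing R K]
    (hR : ∀ q : MvPolynomial ι R, constantCoeff q = 0 → q.totalDegree < Fintype.card ι →
      ∃ x ≠ 0, eval x q = 0)
    (p : MvPolynomial ι K) (h0 : constantCoeff p = 0) (hp : p.totalDegree < Fintype.card ι) :
    ∃ x ≠ 0, eval x p = 0 := by
  obtain ⟨b, hb, q, hq⟩ := exists_map_eq_smul (nonZeroDivisors R) p
  have hinj := IsFractionRing.injective R K
  have hq0 : constantCoeff q = 0 := hinj <| by
    rw [← constantCoeff_map, hq, map_zero, constantCoeff_smul, h0, smul_zero]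
  have hqp : q.totalDegree < Fintype.card ι := by
    rw [← totalDegree_map_of_injective hinj, hq]
    exact (totalDegree_smul_le _ _).trans_lt hp
  obtain ⟨x, hx, hqx⟩ := hR q hq0 hqp
  refine ⟨algebraMap R K ∘ x, ?_, ?_⟩
  · contrapose! hx
    ext i
    exact hinj (by simpa using congr_fun hx i)
  have hbp : algebraMap R K b * eval (algebraMap R K ∘ x) p = 0 :=
    calc algebraMap R K b * eval (algebraMap R K ∘ x) p
        = eval (algebraMap R K ∘ x) (b • p) := by
          rw [Algebra.smul_def, algebraMap_apply, eval_mul, eval_C]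
      _ = algebraMap R K (eval x q) := by rw [← hq, eval_map, eval₂_comp]
      _ = 0 := by rw [hqx, map_zero]
  exact (mul_eq_zero.1 hbp).resolve_left
    (IsFractionRing.to_map_ne_zero_of_mem_nonZeroDivisors hb)

section AlgClosed

variable {k : Type*} [Field k]

theorem comap_translate_vanishingIdeal_singleton (a x : σ → k) :
    (vanishingIdeal k {x}).comap (translate a).toRingEquiv = vanishingIdeal k {x + a} := by
  ext p
  simp

variable [IsAlgClosed k]

-- Translations move any point to any other, and some maximal ideal has height `dim k[σ]`.
theorem height_vanishingIdeal_singleton [Finite σ] (a : σ → k) :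
    (vanishingIdeal k {a}).height = Nat.card σ := by
  have : FiniteRingKrullDim (MvPolynomial σ k) := by
    rw [finiteRingKrullDim_iff_ne_bot_and_top, ringKrullDim_of_isNoetherianRing,
      ringKrullDim_eq_zero_of_field, zero_add]
    exact ⟨nofun, nofun⟩
  obtain ⟨M, hM, hMh⟩ := Ideal.exists_isMaximal_height (R := MvPolynomial σ k)
  obtain ⟨b, rfl⟩ := eq_vanishingIdeal_singleton_of_isMaximal k hM
  rw [ringKrullDim_of_isNoetherianRing, ringKrullDim_eq_zero_of_field, zero_add] at hMh
  rw [← RingEquiv.height_comap (translate (b - a)).toRingEquiv,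
    comap_translate_vanishingIdeal_singleton, add_sub_cancel]
  exact_mod_cast hMh

theorem exists_ne_forall_eval_eq_zero [Finite σ] (s : Finset (MvPolynomial σ k))
    (hs : s.card < Nat.card σ) (a : σ → k) (ha : ∀ f ∈ s, eval a f = 0) :
    ∃ b ≠ a, ∀ f ∈ s, eval b f = 0 := by
  by_contra! h
  have hzero : zeroLocus k (Ideal.span (s : Set (MvPolynomial σ k))) = {a} := by
    ext b
    simp only [zeroLocus_span, Set.mem_ofPred_eq, Set.mem_singleton_iff, Finset.mem_coe]
    refine ⟨fun hb => by_contra fun hba => ?_, by rintro rfl; exact ha⟩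
    obtain ⟨f, hf, hfb⟩ := h b hba
    exact hfb (hb f hf)
  have hmin :
      vanishingIdeal k {a} ∈ (Ideal.span (s : Set (MvPolynomial σ k))).minimalPrimes := by
    rw [← Ideal.radical_minimalPrimes, ← vanishingIdeal_zeroLocus_eq_radical (K := k), hzero,
      Ideal.minimalPrimes_eq_subsingleton_self]
    rfl
  have hheight := Ideal.height_le_card_of_mem_minimalPrimes_span_finset hmin
  rw [height_vanishingIdeal_singleton] at hheight
  exact hs.not_ge (by exact_mod_cast hheight)

theorem exists_ne_zero_eval_eq_zero_of_totalDegree_lt [Fintype ι] (p : MvPolynomial ι k[X])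
    (h0 : constantCoeff p = 0) (hp : p.totalDegree < Fintype.card ι) :
    ∃ x ≠ 0, eval x p = 0 := by
  classical
  set m := p.support.sup fun μ => (p.coeff μ).natDegree
  set d := p.totalDegree
  set N := d * (m + 1) + m + 1
  set x : (ι × Fin (m + 2) → k) → ι → k[X] := fun a i => ofFn (m + 2) fun j => a (i, j)
  obtain ⟨F, hF⟩ : ∃ F : ℕ → MvPolynomial (ι × Fin (m + 2)) k,
      ∀ a r, eval a (F r) = (eval (x a) p).coeff r :=
    exists_forall_eval_eq_coeff_eval_ofFn p (m + 2)
  have hdeg (a) : (eval (x a) p).natDegree < N := by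
    refine Nat.lt_succ_of_le <| natDegree_eval₂_le _ _ p
      (fun i => Nat.le_of_lt_succ (ofFn_natDegree_lt (by omega) _)) fun μ => ?_
    by_cases hμ : μ ∈ p.support
    · exact Finset.le_sup (f := fun μ => (p.coeff μ).natDegree) hμ
    · simp [notMem_support_iff.1 hμ]
  have hcard : ((Finset.range N).image F).card < Nat.card (ι × Fin (m + 2)) := by
    refine Finset.card_image_le.trans_lt ?_
    rw [Finset.card_range, Nat.card_eq_fintype_card, Fintype.card_prod, Fintype.card_fin]
    show d * (m + 1) + m + 1 < _
    nlinarith [Nat.succ_le_of_lt hp]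
  have hx0 : x 0 = 0 := by
    ext1 i
    exact map_zero _
  obtain ⟨a, ha, hzero⟩ := exists_ne_forall_eval_eq_zero _ hcard 0 <| by
    simp only [Finset.mem_image, forall_exists_index, and_imp, forall_apply_eq_imp_iff₂, hF]
    intro r _
    rw [hx0, eval_zero, h0, Polynomial.coeff_zero]
  refine ⟨x a, fun hxa => ha ?_, ?_⟩
  · ext ⟨i, j⟩
    simpa [x] using congr_arg (fun v => (v i).coeff j) hxa
  · ext r
    rw [Polynomial.coeff_zero, ← hF]
    rcases lt_or_ge r N with hr | hr
    · exact hzero _ (Finset.mem_image_of_mem F (Finset.mem_range.2 hr))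
    · rw [hF]
      exact coeff_eq_zero_of_natDegree_lt ((hdeg a).trans_le hr)

end AlgClosed

end MvPolynomial

/-- Tsen's theorem: the rational function field `k(t)` over an algebraically closed
field `k` is a `C₁` field. -/
theorem tsen_rational_function_field_is_C1 (k : Type*) [Field k] [IsAlgClosed k]
    (d n : ℕ) (hd : 1 ≤ d) (hn : d < n)
    (f : MvPolynomial (Fin n) (RatFunc k)) (hf : f.IsHomogeneous d) :
    ∃ x : Fin n → RatFunc k, x ≠ 0 ∧ MvPolynomial.eval x f = 0 := by
  refine MvPolynomial.exists_ne_zero_eval_eq_zero_of_isFractionRing k[X]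
    (fun q => MvPolynomial.exists_ne_zero_eval_eq_zero_of_totalDegree_lt q) f ?_ ?_
  · rw [MvPolynomial.constantCoeff_eq]
    exact hf.coeff_eq_zero (by rw [map_zero]; omega)
  · simpa using hf.totalDegree_le.trans_lt hn
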